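/- arXiv:0804.4420 — 2 statements merged into one kernel-verified Lean document; each statement's English description precedes it below -/
import Mathlib

section
/- First mean value theorem for diamond-alpha integrals: let f and g be bounded and diamond-alpha integrable from a to b, with g nonnegative on [a,b], and let m = inf f and M = sup f on [a,b]. Then there exists K ∈ [m, M] with ∫ₐᵇ f(t)g(t) ⋄_α t = K ∫ₐᵇ g(t) ⋄_α t. -/
/-! Since `g ≥ 0`, we have `m g ≤ f g ≤ M g` on `T ∩ [a, b]`, so monotonicity of the upper
and lower Darboux integrals gives `m ∫ g ≤ ∫ f g ≤ M ∫ g`, and `K` comes from the intermediate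
value theorem applied to `K ↦ K ∫ g`. The product `f g` is integrable by Riemann's criterion: on
every cell the oscillation of `f g` is at most `C_g osc f + C_f osc g`, so a common refinement of
partitions on which the Darboux sums of `f` and of `g` are close makes those of `f g` close. -/

open Set Filter Topology

attribute [local instance] Classical.propDecidable

/-- A partition `a = t₀ < t₁ < ⋯ < tₙ = b` of `[a,b]` with points in the time scale `T`. -/
structure TSPartition (T : Set ℝ) (a b : ℝ) where
  n : ℕ
  npos : 0 < n
  pt : ℕ → ℝ
  mem : ∀ i ≤ n, pt i ∈ T
  mono : ∀ i < n, pt i < pt (i + 1)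
  first : pt 0 = a
  last : pt n = b

/-- Upper Darboux diamond-alpha sum. -/
noncomputable def upperDSum (T : Set ℝ) (f : ℝ → ℝ) (α : ℝ) {a b : ℝ}
    (P : TSPartition T a b) : ℝ :=
  ∑ i ∈ Finset.range P.n,
    (α * sSup (f '' (T ∩ Set.Ico (P.pt i) (P.pt (i + 1)))) +
        (1 - α) * sSup (f '' (T ∩ Set.Ioc (P.pt i) (P.pt (i + 1))))) *
      (P.pt (i + 1) - P.pt i)

/-- Lower Darboux diamond-alpha sum. -/
noncomputable def lowerDSum (T : Set ℝ) (f : ℝ → ℝ) (α : ℝ) {a b : ℝ}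
    (P : TSPartition T a b) : ℝ :=
  ∑ i ∈ Finset.range P.n,
    (α * sInf (f '' (T ∩ Set.Ico (P.pt i) (P.pt (i + 1)))) +
        (1 - α) * sInf (f '' (T ∩ Set.Ioc (P.pt i) (P.pt (i + 1))))) *
      (P.pt (i + 1) - P.pt i)

/-- Upper Darboux diamond-alpha integral. -/
noncomputable def upperDIntegral (T : Set ℝ) (f : ℝ → ℝ) (α a b : ℝ) : ℝ :=
  sInf {x | ∃ P : TSPartition T a b, x = upperDSum T f α P}

/-- Lower Darboux diamond-alpha integral. -/
noncomputable def lowerDIntegral (T : Set ℝ) (f : ℝ → ℝ) (α a b : ℝ) : ℝ :=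
  sSup {x | ∃ P : TSPartition T a b, x = lowerDSum T f α P}

/-- Darboux diamond-alpha integrability: upper and lower integrals coincide. -/
def DiamondIntegrable (T : Set ℝ) (f : ℝ → ℝ) (α a b : ℝ) : Prop :=
  lowerDIntegral T f α a b = upperDIntegral T f α a b

/-- The Darboux diamond-alpha integral (the common value, taken as the upper integral). -/
noncomputable def diamondIntegral (T : Set ℝ) (f : ℝ → ℝ) (α a b : ℝ) : ℝ :=
  upperDIntegral T f α a b

/-- Forward jump operator on a time scale. -/

noncomputable def tsSigma (T : Set ℝ) (t : ℝ) : ℝ :=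
  if (T ∩ Set.Ioi t).Nonempty then sInf (T ∩ Set.Ioi t) else t

/-- Backward jump operator on a time scale. -/

noncomputable def tsRho (T : Set ℝ) (t : ℝ) : ℝ :=
  if (T ∩ Set.Iio t).Nonempty then sSup (T ∩ Set.Iio t) else t

/-- The delta derivative of `f` at `t` equals `L`. -/
def HasDeltaDerivAt (T : Set ℝ) (f : ℝ → ℝ) (t L : ℝ) : Prop :=
  ∀ ε > (0 : ℝ), ∃ δ > (0 : ℝ), ∀ s ∈ T, |t - s| < δ →
    |f (tsSigma T t) - f s - L * (tsSigma T t - s)| ≤ ε * |tsSigma T t - s|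

/-- The nabla derivative of `f` at `t` equals `L`. -/
def HasNablaDerivAt (T : Set ℝ) (f : ℝ → ℝ) (t L : ℝ) : Prop :=
  ∀ ε > (0 : ℝ), ∃ δ > (0 : ℝ), ∀ s ∈ T, |t - s| < δ →
    |f (tsRho T t) - f s - L * (tsRho T t - s)| ≤ ε * |tsRho T t - s|

namespace TSPartition

variable {T : Set ℝ} {a b : ℝ}

theorem strictMonoOn_pt (P : TSPartition T a b) : StrictMonoOn P.pt (Iic P.n) :=
  strictMonoOn_Iic_of_lt_succ P.mono

theorem pt_mem_Icc (P : TSPartition T a b) {i : ℕ} (hi : i ≤ P.n) : P.pt i ∈ Icc a b := by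
  have h := P.strictMonoOn_pt.monotoneOn
  constructor
  · simpa only [P.first] using h (Nat.zero_le P.n) hi (Nat.zero_le i)
  · simpa only [P.last] using h hi (le_refl P.n) hi

noncomputable def single (ha : a ∈ T) (hb : b ∈ T) (hab : a < b) : TSPartition T a b where
  n := 1
  npos := one_pos
  pt i := if i = 0 then a else b
  mem i _ := by split_ifs <;> assumption
  mono i hi := by simp [Nat.lt_one_iff.1 hi, hab]
  first := rfl
  last := rfl

theorem nonempty (ha : a ∈ T) (hb : b ∈ T) (hab : a < b) : Nonempty (TSPartition T a b) :=
  ⟨single ha hb hab⟩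

noncomputable def pts (P : TSPartition T a b) : Finset ℝ :=
  (Finset.range (P.n + 1)).image P.pt

theorem mem_pts {P : TSPartition T a b} {x : ℝ} : x ∈ P.pts ↔ ∃ i ≤ P.n, P.pt i = x := by
  simp [pts]

theorem coe_pts_subset (P : TSPartition T a b) : ↑P.pts ⊆ T ∩ Icc a b := by
  intro x hx
  obtain ⟨i, hi, rfl⟩ := mem_pts.1 hx
  exact ⟨P.mem i hi, P.pt_mem_Icc hi⟩

theorem left_mem_pts (P : TSPartition T a b) : a ∈ P.pts :=
  mem_pts.2 ⟨0, Nat.zero_le _, P.first⟩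

noncomputable def ofFinset (S : Finset ℝ) (hS : ↑S ⊆ T ∩ Icc a b) (haS : a ∈ S) (hbS : b ∈ S)
    (hab : a < b) : TSPartition T a b where
  n := S.card - 1
  npos := by
    have := Finset.one_lt_card.2 ⟨a, haS, b, hbS, hab.ne⟩
    omega
  pt i := if h : i < S.card then S.orderEmbOfFin rfl ⟨i, h⟩ else b
  mem i hi := by
    have := Finset.one_lt_card.2 ⟨a, haS, b, hbS, hab.ne⟩
    rw [dif_pos (by omega)]
    exact (hS (S.orderEmbOfFin_mem rfl _)).1
  mono i hi := by
    rw [dif_pos (by omega), dif_pos (by omega)]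
    exact (S.orderEmbOfFin rfl).strictMono (Fin.mk_lt_mk.2 i.lt_succ_self)
  first := by
    have h0 : 0 < S.card := Finset.card_pos.2 ⟨a, haS⟩
    rw [dif_pos h0, Finset.orderEmbOfFin_zero rfl h0]
    exact le_antisymm (S.min'_le a haS) (hS (S.min'_mem _)).2.1
  last := by
    have h0 : 0 < S.card := Finset.card_pos.2 ⟨a, haS⟩
    rw [dif_pos (by omega), Finset.orderEmbOfFin_last rfl h0]
    exact le_antisymm (hS (S.max'_mem _)).2.2 (S.le_max' b hbS)

theorem subset_pts_ofFinset (S : Finset ℝ) (hS : ↑S ⊆ T ∩ Icc a b) (haS : a ∈ S) (hbS : b ∈ S)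
    (hab : a < b) : S ⊆ (ofFinset S hS haS hbS hab).pts := by
  intro x hx
  obtain ⟨⟨j, hj⟩, hjx⟩ : x ∈ Set.range (S.orderEmbOfFin rfl) := by
    rw [Finset.range_orderEmbOfFin]; exact hx
  exact mem_pts.2 ⟨j, by simp only [ofFinset]; omega, by simp [ofFinset, hj, hjx]⟩

theorem exists_index_map {P R : TSPartition T a b} (h : P.pts ⊆ R.pts) :
    ∃ k : ℕ → ℕ, k 0 = 0 ∧ k P.n = R.n ∧ (∀ i < P.n, k i < k (i + 1)) ∧
      ∀ i ≤ P.n, k i ≤ R.n ∧ R.pt (k i) = P.pt i := by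
  have hex : ∀ i, ∃ j, i ≤ P.n → j ≤ R.n ∧ R.pt j = P.pt i := fun i => by
    by_cases hi : i ≤ P.n
    · obtain ⟨j, hj, hjx⟩ := mem_pts.1 (h (mem_pts.2 ⟨i, hi, rfl⟩))
      exact ⟨j, fun _ => ⟨hj, hjx⟩⟩
    · exact ⟨0, fun h => absurd h hi⟩
  choose k hk using hex
  refine ⟨k, ?_, ?_, fun i hi => ?_, hk⟩
  · exact R.strictMonoOn_pt.injOn (hk 0 (Nat.zero_le _)).1 (Nat.zero_le R.n)
      (by rw [(hk 0 (Nat.zero_le _)).2, P.first, R.first])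
  · exact R.strictMonoOn_pt.injOn (hk P.n le_rfl).1 (le_refl R.n)
      (by rw [(hk P.n le_rfl).2, P.last, R.last])
  · rw [← R.strictMonoOn_pt.lt_iff_lt (hk i hi.le).1 (hk (i + 1) hi).1, (hk i hi.le).2,
      (hk (i + 1) hi).2]
    exact P.mono i hi

theorem exists_common_refinement (hab : a < b) (P Q : TSPartition T a b) :
    ∃ R : TSPartition T a b, P.pts ⊆ R.pts ∧ Q.pts ⊆ R.pts := by
  have hS : ↑(P.pts ∪ Q.pts) ⊆ T ∩ Icc a b := by
    rw [Finset.coe_union]; exact union_subset P.coe_pts_subset Q.coe_pts_subset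
  have hR := subset_pts_ofFinset _ hS (Finset.mem_union_left _ P.left_mem_pts)
    (Finset.mem_union_left _ (mem_pts.2 ⟨P.n, le_rfl, P.last⟩)) hab
  exact ⟨_, Finset.union_subset_left hR, Finset.union_subset_right hR⟩

end TSPartition

namespace DiamondAlpha

open Bornology Metric

variable {T : Set ℝ} {a b x y x' y' c α : ℝ} {φ ψ : ℝ → ℝ}

theorem convex_combination_le {A B A' B' : ℝ} (hα : α ∈ Icc (0 : ℝ) 1) (hA : A ≤ A')
    (hB : B ≤ B') : α * A + (1 - α) * B ≤ α * A' + (1 - α) * B' :=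
  add_le_add (mul_le_mul_of_nonneg_left hA hα.1) (mul_le_mul_of_nonneg_left hB (sub_nonneg.2 hα.2))

theorem image_neg_fun (φ : ℝ → ℝ) (s : Set ℝ) : (fun t => -φ t) '' s = -(φ '' s) := by
  rw [← image_neg_eq_neg, image_image]

theorem _root_.Bornology.IsBounded.image_neg {s : Set ℝ} (hφ : IsBounded (φ '' s)) :
    IsBounded ((fun t => -φ t) '' s) := by
  rw [image_neg_fun]; exact hφ.neg

theorem isBounded_image_of_abs_le {s : Set ℝ} {C : ℝ} (h : ∀ t ∈ s, |φ t| ≤ C) :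
    IsBounded (φ '' s) :=
  isBounded_iff_forall_norm_le.2 ⟨C, forall_mem_image.2 h⟩

theorem forall_abs_mul_le {s : Set ℝ} {f g : ℝ → ℝ} {Cf Cg : ℝ} (hCf : 0 ≤ Cf)
    (hf : ∀ t ∈ s, |f t| ≤ Cf) (hg : ∀ t ∈ s, |g t| ≤ Cg) : ∀ t ∈ s, |f t * g t| ≤ Cf * Cg :=
  fun t ht => (abs_mul (f t) (g t)).trans_le (mul_le_mul (hf t ht) (hg t ht) (abs_nonneg _) hCf)

theorem diam_image_mul_le {s : Set ℝ} {f g : ℝ → ℝ} {Cf Cg : ℝ} (hCf : 0 ≤ Cf) (hCg : 0 ≤ Cg)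
    (hf : ∀ t ∈ s, |f t| ≤ Cf) (hg : ∀ t ∈ s, |g t| ≤ Cg) :
    diam ((fun t => f t * g t) '' s) ≤ Cg * diam (f '' s) + Cf * diam (g '' s) := by
  refine diam_le_of_forall_dist_le (by positivity)
    (forall_mem_image.2 fun u hu => forall_mem_image.2 fun v hv => ?_)
  have hfd := dist_le_diam_of_mem (isBounded_image_of_abs_le hf) (mem_image_of_mem f hu)
    (mem_image_of_mem f hv)
  have hgd := dist_le_diam_of_mem (isBounded_image_of_abs_le hg) (mem_image_of_mem g hu)
    (mem_image_of_mem g hv)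
  rw [Real.dist_eq] at hfd hgd ⊢
  calc |f u * g u - f v * g v| = |f u * (g u - g v) + g v * (f u - f v)| := by ring_nf
    _ ≤ |f u| * |g u - g v| + |g v| * |f u - f v| := by
      rw [← abs_mul, ← abs_mul]; exact abs_add_le _ _
    _ ≤ Cf * diam (g '' s) + Cg * diam (f '' s) :=
      add_le_add (mul_le_mul (hf u hu) hgd (abs_nonneg _) hCf)
        (mul_le_mul (hg v hv) hfd (abs_nonneg _) hCg)
    _ = Cg * diam (f '' s) + Cf * diam (g '' s) := add_comm _ _

structure IsCell (T : Set ℝ) (a b x y : ℝ) : Prop where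
  left_mem : x ∈ T
  right_mem : y ∈ T
  le_left : a ≤ x
  lt : x < y
  right_le : y ≤ b

namespace IsCell

theorem Ico_subset (h : IsCell T a b x y) : T ∩ Ico x y ⊆ T ∩ Icc a b :=
  inter_subset_inter_right T (Ico_subset_Icc_self.trans (Icc_subset_Icc h.le_left h.right_le))

theorem Ioc_subset (h : IsCell T a b x y) : T ∩ Ioc x y ⊆ T ∩ Icc a b :=
  inter_subset_inter_right T (Ioc_subset_Icc_self.trans (Icc_subset_Icc h.le_left h.right_le))

theorem Ico_nonempty (h : IsCell T a b x y) : (T ∩ Ico x y).Nonempty :=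
  ⟨x, h.left_mem, le_rfl, h.lt⟩

theorem Ioc_nonempty (h : IsCell T a b x y) : (T ∩ Ioc x y).Nonempty :=
  ⟨y, h.right_mem, h.lt, le_rfl⟩

theorem trans (hxc : IsCell T a b x c) (hcy : IsCell T a b c y) : IsCell T a b x y :=
  ⟨hxc.left_mem, hcy.right_mem, hxc.le_left, hxc.lt.trans hcy.lt, hcy.right_le⟩

end IsCell

theorem _root_.TSPartition.isCell (P : TSPartition T a b) {i j : ℕ} (hij : i < j) (hj : j ≤ P.n) :
    IsCell T a b (P.pt i) (P.pt j) :=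
  ⟨P.mem i (by omega), P.mem j hj, (P.pt_mem_Icc (by omega)).1,
    P.strictMonoOn_pt (show i ≤ P.n by omega) hj hij, (P.pt_mem_Icc hj).2⟩

noncomputable def cellSup (T : Set ℝ) (φ : ℝ → ℝ) (α x y : ℝ) : ℝ :=
  α * sSup (φ '' (T ∩ Ico x y)) + (1 - α) * sSup (φ '' (T ∩ Ioc x y))

noncomputable def cellInf (T : Set ℝ) (φ : ℝ → ℝ) (α x y : ℝ) : ℝ :=
  α * sInf (φ '' (T ∩ Ico x y)) + (1 - α) * sInf (φ '' (T ∩ Ioc x y))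

theorem cellInf_eq_neg_cellSup_neg : cellInf T φ α x y = -cellSup T (fun t => -φ t) α x y := by
  simp only [cellInf, cellSup, image_neg_fun, Real.sSup_neg]
  ring

theorem cellSup_mono_cell (hφ : IsBounded (φ '' (T ∩ Icc a b))) (hα : α ∈ Icc (0 : ℝ) 1)
    (h : IsCell T a b x y) (h' : IsCell T a b x' y') (hx : x ≤ x') (hy : y' ≤ y) :
    cellSup T φ α x' y' ≤ cellSup T φ α x y := by
  have hsup : ∀ {s s' : Set ℝ}, s' ⊆ s → s ⊆ T ∩ Icc a b → s'.Nonempty →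
      sSup (φ '' s') ≤ sSup (φ '' s) := fun hs' hs hne =>
    csSup_le_csSup ((hφ.subset (image_mono hs)).bddAbove) (hne.image φ) (image_mono hs')
  exact convex_combination_le hα
    (hsup (inter_subset_inter_right T (Ico_subset_Ico hx hy)) h.Ico_subset h'.Ico_nonempty)
    (hsup (inter_subset_inter_right T (Ioc_subset_Ioc hx hy)) h.Ioc_subset h'.Ioc_nonempty)

theorem cellSup_mul_add_cellSup_mul_le (hφ : IsBounded (φ '' (T ∩ Icc a b)))
    (hα : α ∈ Icc (0 : ℝ) 1) (hxc : IsCell T a b x c) (hcy : IsCell T a b c y) :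
    cellSup T φ α x c * (c - x) + cellSup T φ α c y * (y - c) ≤ cellSup T φ α x y * (y - x) := by
  have hxy := hxc.trans hcy
  calc cellSup T φ α x c * (c - x) + cellSup T φ α c y * (y - c)
      ≤ cellSup T φ α x y * (c - x) + cellSup T φ α x y * (y - c) := by
        gcongr
        · exact sub_nonneg.2 hxc.lt.le
        · exact cellSup_mono_cell hφ hα hxy hxc le_rfl hcy.lt.le
        · exact sub_nonneg.2 hcy.lt.le
        · exact cellSup_mono_cell hφ hα hxy hcy hxc.lt.le le_rfl
    _ = cellSup T φ α x y * (y - x) := by ring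

theorem cellSup_mono_fun (hψ : IsBounded (ψ '' (T ∩ Icc a b))) (hα : α ∈ Icc (0 : ℝ) 1)
    (h : IsCell T a b x y) (hφψ : ∀ t ∈ T ∩ Icc a b, φ t ≤ ψ t) :
    cellSup T φ α x y ≤ cellSup T ψ α x y := by
  have hsup : ∀ {s : Set ℝ}, s ⊆ T ∩ Icc a b → s.Nonempty → sSup (φ '' s) ≤ sSup (ψ '' s) :=
    fun hs hne => csSup_le (hne.image φ) (forall_mem_image.2 fun t ht =>
      (hφψ t (hs ht)).trans (le_csSup (hψ.subset (image_mono hs)).bddAbove (mem_image_of_mem ψ ht)))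
  exact convex_combination_le hα (hsup h.Ico_subset h.Ico_nonempty)
    (hsup h.Ioc_subset h.Ioc_nonempty)

theorem cellInf_le_cellSup (hφ : IsBounded (φ '' (T ∩ Icc a b))) (hα : α ∈ Icc (0 : ℝ) 1)
    (h : IsCell T a b x y) : cellInf T φ α x y ≤ cellSup T φ α x y := by
  have hle : ∀ {s : Set ℝ}, s ⊆ T ∩ Icc a b → s.Nonempty → sInf (φ '' s) ≤ sSup (φ '' s) :=
    fun hs hne => have hb := hφ.subset (image_mono hs)
      csInf_le_csSup (hne.image φ) hb.bddBelow hb.bddAbove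
  exact convex_combination_le hα (hle h.Ico_subset h.Ico_nonempty)
    (hle h.Ioc_subset h.Ioc_nonempty)

theorem cellSup_const_mul (hc : 0 ≤ c) :
    cellSup T (fun t => c * φ t) α x y = c * cellSup T φ α x y := by
  have hsup : ∀ s : Set ℝ, sSup ((fun t => c * φ t) '' s) = c * sSup (φ '' s) := fun s => by
    rw [← smul_eq_mul, ← Real.sSup_smul_of_nonneg hc, ← image_smul, image_image]
    rfl
  simp only [cellSup, hsup]
  ring

theorem cellSup_sub_cellInf (hφ : IsBounded (φ '' (T ∩ Icc a b))) (h : IsCell T a b x y) :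
    cellSup T φ α x y - cellInf T φ α x y =
      α * diam (φ '' (T ∩ Ico x y)) + (1 - α) * diam (φ '' (T ∩ Ioc x y)) := by
  rw [Real.diam_eq (hφ.subset (image_mono h.Ico_subset)),
    Real.diam_eq (hφ.subset (image_mono h.Ioc_subset))]
  simp only [cellSup, cellInf]
  ring

theorem cellSup_mul_sub_cellInf_mul_le {f g : ℝ → ℝ} {Cf Cg : ℝ} (hCf : 0 ≤ Cf) (hCg : 0 ≤ Cg)
    (hf : ∀ t ∈ T ∩ Icc a b, |f t| ≤ Cf) (hg : ∀ t ∈ T ∩ Icc a b, |g t| ≤ Cg)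
    (hα : α ∈ Icc (0 : ℝ) 1) (h : IsCell T a b x y) :
    cellSup T (fun t => f t * g t) α x y - cellInf T (fun t => f t * g t) α x y ≤
      Cg * (cellSup T f α x y - cellInf T f α x y) +
        Cf * (cellSup T g α x y - cellInf T g α x y) := by
  have hdiam : ∀ {s : Set ℝ}, s ⊆ T ∩ Icc a b →
      diam ((fun t => f t * g t) '' s) ≤ Cg * diam (f '' s) + Cf * diam (g '' s) := fun hs =>
    diam_image_mul_le hCf hCg (fun t ht => hf t (hs ht)) (fun t ht => hg t (hs ht))
  rw [cellSup_sub_cellInf (isBounded_image_of_abs_le (forall_abs_mul_le hCf hf hg)) h,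
    cellSup_sub_cellInf (isBounded_image_of_abs_le hf) h,
    cellSup_sub_cellInf (isBounded_image_of_abs_le hg) h]
  linarith [convex_combination_le hα (hdiam h.Ico_subset) (hdiam h.Ioc_subset)]

theorem upperDSum_eq (P : TSPartition T a b) : upperDSum T φ α P =
    ∑ i ∈ Finset.range P.n, cellSup T φ α (P.pt i) (P.pt (i + 1)) * (P.pt (i + 1) - P.pt i) :=
  rfl

theorem lowerDSum_eq (P : TSPartition T a b) : lowerDSum T φ α P =
    ∑ i ∈ Finset.range P.n, cellInf T φ α (P.pt i) (P.pt (i + 1)) * (P.pt (i + 1) - P.pt i) :=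
  rfl

theorem lowerDSum_eq_neg_upperDSum_neg (P : TSPartition T a b) :
    lowerDSum T φ α P = -upperDSum T (fun t => -φ t) α P := by
  simp only [lowerDSum_eq, upperDSum_eq, cellInf_eq_neg_cellSup_neg, neg_mul,
    Finset.sum_neg_distrib]

theorem sum_cellSup_le (hφ : IsBounded (φ '' (T ∩ Icc a b))) (hα : α ∈ Icc (0 : ℝ) 1)
    (R : TSPartition T a b) {p q : ℕ} (hpq : p < q) (hq : q ≤ R.n) :
    ∑ j ∈ Finset.Ico p q, cellSup T φ α (R.pt j) (R.pt (j + 1)) * (R.pt (j + 1) - R.pt j) ≤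
      cellSup T φ α (R.pt p) (R.pt q) * (R.pt q - R.pt p) := by
  induction q, hpq using Nat.le_induction with
  | base => simp
  | succ q hpq ih =>
    rw [Finset.sum_Ico_succ_top (by omega)]
    exact (add_le_add_left (ih (by omega)) _).trans (cellSup_mul_add_cellSup_mul_le hφ hα
      (R.isCell hpq (by omega)) (R.isCell q.lt_succ_self hq))

theorem upperDSum_le_of_pts_subset (hφ : IsBounded (φ '' (T ∩ Icc a b)))
    (hα : α ∈ Icc (0 : ℝ) 1) {P R : TSPartition T a b} (h : P.pts ⊆ R.pts) :
    upperDSum T φ α R ≤ upperDSum T φ α P := by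
  obtain ⟨k, hk_zero, hk_last, hk_lt, hk⟩ := TSPartition.exists_index_map h
  have key : ∀ m ≤ P.n,
      ∑ j ∈ Finset.range (k m), cellSup T φ α (R.pt j) (R.pt (j + 1)) * (R.pt (j + 1) - R.pt j) ≤
        ∑ i ∈ Finset.range m, cellSup T φ α (P.pt i) (P.pt (i + 1)) * (P.pt (i + 1) - P.pt i) := by
    intro m
    induction m with
    | zero => simp [hk_zero]
    | succ m ih =>
      intro hm
      rw [← Finset.sum_range_add_sum_Ico _ (hk_lt m hm).le, Finset.sum_range_succ]
      have hblock := sum_cellSup_le hφ hα R (hk_lt m hm) (hk (m + 1) hm).1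
      rw [(hk m (by omega)).2, (hk (m + 1) hm).2] at hblock
      exact add_le_add (ih (by omega)) hblock
  simpa only [upperDSum_eq, hk_last] using key P.n le_rfl

theorem lowerDSum_le_of_pts_subset (hφ : IsBounded (φ '' (T ∩ Icc a b)))
    (hα : α ∈ Icc (0 : ℝ) 1) {P R : TSPartition T a b} (h : P.pts ⊆ R.pts) :
    lowerDSum T φ α P ≤ lowerDSum T φ α R := by
  simpa only [lowerDSum_eq_neg_upperDSum_neg, neg_le_neg_iff]
    using upperDSum_le_of_pts_subset hφ.image_neg hα h

theorem lowerDSum_le_upperDSum (hφ : IsBounded (φ '' (T ∩ Icc a b))) (hα : α ∈ Icc (0 : ℝ) 1)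
    (P : TSPartition T a b) : lowerDSum T φ α P ≤ upperDSum T φ α P :=
  Finset.sum_le_sum fun i hi => mul_le_mul_of_nonneg_right
    (cellInf_le_cellSup hφ hα (P.isCell i.lt_succ_self (Finset.mem_range.1 hi)))
    (sub_nonneg.2 (P.mono i (Finset.mem_range.1 hi)).le)

theorem lowerDSum_le_upperDSum_of_partitions (hab : a < b) (hφ : IsBounded (φ '' (T ∩ Icc a b)))
    (hα : α ∈ Icc (0 : ℝ) 1) (P Q : TSPartition T a b) :
    lowerDSum T φ α Q ≤ upperDSum T φ α P := by
  obtain ⟨R, hPR, hQR⟩ := TSPartition.exists_common_refinement hab P Q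
  exact (lowerDSum_le_of_pts_subset hφ hα hQR).trans
    ((lowerDSum_le_upperDSum hφ hα R).trans (upperDSum_le_of_pts_subset hφ hα hPR))

theorem upperDSum_mono (hψ : IsBounded (ψ '' (T ∩ Icc a b))) (hα : α ∈ Icc (0 : ℝ) 1)
    (hφψ : ∀ t ∈ T ∩ Icc a b, φ t ≤ ψ t) (P : TSPartition T a b) :
    upperDSum T φ α P ≤ upperDSum T ψ α P :=
  Finset.sum_le_sum fun i hi => mul_le_mul_of_nonneg_right
    (cellSup_mono_fun hψ hα (P.isCell i.lt_succ_self (Finset.mem_range.1 hi)) hφψ)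
    (sub_nonneg.2 (P.mono i (Finset.mem_range.1 hi)).le)

theorem lowerDSum_mono (hφ : IsBounded (φ '' (T ∩ Icc a b))) (hα : α ∈ Icc (0 : ℝ) 1)
    (hφψ : ∀ t ∈ T ∩ Icc a b, φ t ≤ ψ t) (P : TSPartition T a b) :
    lowerDSum T φ α P ≤ lowerDSum T ψ α P := by
  simpa only [lowerDSum_eq_neg_upperDSum_neg, neg_le_neg_iff] using
    upperDSum_mono hφ.image_neg hα (fun t ht => neg_le_neg (hφψ t ht)) P

theorem upperDSum_const_mul (hc : 0 ≤ c) (P : TSPartition T a b) :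
    upperDSum T (fun t => c * φ t) α P = c * upperDSum T φ α P := by
  simp only [upperDSum_eq, cellSup_const_mul hc, Finset.mul_sum, mul_assoc]

theorem upperDSum_mul_sub_lowerDSum_mul_le {f g : ℝ → ℝ} {Cf Cg : ℝ} (hCf : 0 ≤ Cf)
    (hCg : 0 ≤ Cg) (hf : ∀ t ∈ T ∩ Icc a b, |f t| ≤ Cf) (hg : ∀ t ∈ T ∩ Icc a b, |g t| ≤ Cg)
    (hα : α ∈ Icc (0 : ℝ) 1) (P : TSPartition T a b) :
    upperDSum T (fun t => f t * g t) α P - lowerDSum T (fun t => f t * g t) α P ≤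
      Cg * (upperDSum T f α P - lowerDSum T f α P) +
        Cf * (upperDSum T g α P - lowerDSum T g α P) := by
  simp only [upperDSum_eq, lowerDSum_eq, ← Finset.sum_sub_distrib, Finset.mul_sum,
    ← Finset.sum_add_distrib]
  refine Finset.sum_le_sum fun i hi => ?_
  have hcell := cellSup_mul_sub_cellInf_mul_le hCf hCg hf hg hα
    (P.isCell i.lt_succ_self (Finset.mem_range.1 hi))
  have hlen := sub_nonneg.2 (P.mono i (Finset.mem_range.1 hi)).le
  nlinarith

theorem upperDSum_sub_lowerDSum_le_of_pts_subset (hφ : IsBounded (φ '' (T ∩ Icc a b)))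
    (hα : α ∈ Icc (0 : ℝ) 1) {P R : TSPartition T a b} (h : P.pts ⊆ R.pts) :
    upperDSum T φ α R - lowerDSum T φ α R ≤ upperDSum T φ α P - lowerDSum T φ α P :=
  sub_le_sub (upperDSum_le_of_pts_subset hφ hα h) (lowerDSum_le_of_pts_subset hφ hα h)

theorem upperDIntegral_eq_iInf (T : Set ℝ) (φ : ℝ → ℝ) (α a b : ℝ) :
    upperDIntegral T φ α a b = ⨅ P : TSPartition T a b, upperDSum T φ α P := by
  rw [upperDIntegral, iInf]
  congr 1
  ext x
  exact exists_congr fun _ => eq_comm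

theorem lowerDIntegral_eq_iSup (T : Set ℝ) (φ : ℝ → ℝ) (α a b : ℝ) :
    lowerDIntegral T φ α a b = ⨆ P : TSPartition T a b, lowerDSum T φ α P := by
  rw [lowerDIntegral, iSup]
  congr 1
  ext x
  exact exists_congr fun _ => eq_comm

theorem lowerDIntegral_eq_neg_upperDIntegral_neg :
    lowerDIntegral T φ α a b = -upperDIntegral T (fun t => -φ t) α a b := by
  rw [lowerDIntegral_eq_iSup, upperDIntegral_eq_iInf, iSup, iInf, ← Real.sSup_neg]
  congr 1
  ext x
  simp [lowerDSum_eq_neg_upperDSum_neg, neg_eq_iff_eq_neg]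

theorem upperDIntegral_neg :
    upperDIntegral T (fun t => -φ t) α a b = -lowerDIntegral T φ α a b := by
  rw [lowerDIntegral_eq_neg_upperDIntegral_neg, neg_neg]

theorem upperDIntegral_le_upperDSum (hab : a < b) (hφ : IsBounded (φ '' (T ∩ Icc a b)))
    (hα : α ∈ Icc (0 : ℝ) 1) (P : TSPartition T a b) :
    upperDIntegral T φ α a b ≤ upperDSum T φ α P := by
  rw [upperDIntegral_eq_iInf]
  exact ciInf_le ⟨lowerDSum T φ α P, forall_mem_range.2 fun Q =>
    lowerDSum_le_upperDSum_of_partitions hab hφ hα Q P⟩ P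

theorem lowerDSum_le_lowerDIntegral (hab : a < b) (hφ : IsBounded (φ '' (T ∩ Icc a b)))
    (hα : α ∈ Icc (0 : ℝ) 1) (P : TSPartition T a b) :
    lowerDSum T φ α P ≤ lowerDIntegral T φ α a b := by
  rw [lowerDIntegral_eq_iSup]
  exact le_ciSup ⟨upperDSum T φ α P, forall_mem_range.2 fun Q =>
    lowerDSum_le_upperDSum_of_partitions hab hφ hα P Q⟩ P

theorem lowerDIntegral_le_upperDIntegral (ha : a ∈ T) (hb : b ∈ T) (hab : a < b)
    (hφ : IsBounded (φ '' (T ∩ Icc a b))) (hα : α ∈ Icc (0 : ℝ) 1) :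
    lowerDIntegral T φ α a b ≤ upperDIntegral T φ α a b := by
  have := TSPartition.nonempty ha hb hab
  rw [lowerDIntegral_eq_iSup, upperDIntegral_eq_iInf]
  exact ciSup_le fun Q => le_ciInf fun P => lowerDSum_le_upperDSum_of_partitions hab hφ hα P Q

theorem upperDIntegral_mono (ha : a ∈ T) (hb : b ∈ T) (hab : a < b)
    (hφ : IsBounded (φ '' (T ∩ Icc a b))) (hψ : IsBounded (ψ '' (T ∩ Icc a b)))
    (hα : α ∈ Icc (0 : ℝ) 1) (hφψ : ∀ t ∈ T ∩ Icc a b, φ t ≤ ψ t) :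
    upperDIntegral T φ α a b ≤ upperDIntegral T ψ α a b := by
  have := TSPartition.nonempty ha hb hab
  rw [upperDIntegral_eq_iInf T ψ]
  exact le_ciInf fun P =>
    (upperDIntegral_le_upperDSum hab hφ hα P).trans (upperDSum_mono hψ hα hφψ P)

theorem lowerDIntegral_mono (ha : a ∈ T) (hb : b ∈ T) (hab : a < b)
    (hφ : IsBounded (φ '' (T ∩ Icc a b))) (hψ : IsBounded (ψ '' (T ∩ Icc a b)))
    (hα : α ∈ Icc (0 : ℝ) 1) (hφψ : ∀ t ∈ T ∩ Icc a b, φ t ≤ ψ t) :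
    lowerDIntegral T φ α a b ≤ lowerDIntegral T ψ α a b := by
  have := TSPartition.nonempty ha hb hab
  rw [lowerDIntegral_eq_iSup T φ]
  exact ciSup_le fun P =>
    (lowerDSum_mono hφ hα hφψ P).trans (lowerDSum_le_lowerDIntegral hab hψ hα P)

theorem upperDIntegral_const_mul (hc : 0 ≤ c) :
    upperDIntegral T (fun t => c * φ t) α a b = c * upperDIntegral T φ α a b := by
  simp only [upperDIntegral_eq_iInf, upperDSum_const_mul hc, Real.mul_iInf_of_nonneg hc]

theorem _root_.DiamondIntegrable.upperDIntegral_const_mul (h : DiamondIntegrable T φ α a b)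
    (c : ℝ) :
    upperDIntegral T (fun t => c * φ t) α a b = c * diamondIntegral T φ α a b := by
  rcases le_or_gt 0 c with hc | hc
  · exact DiamondAlpha.upperDIntegral_const_mul hc
  · -- a negative factor exchanges the upper and the lower integral
    have hneg : (fun t => c * φ t) = fun t => -c * -φ t := funext fun _ => (neg_mul_neg _ _).symm
    rw [hneg, DiamondAlpha.upperDIntegral_const_mul (neg_nonneg.2 hc.le), upperDIntegral_neg,
      h, diamondIntegral, neg_mul_neg]

theorem _root_.DiamondIntegrable.lowerDIntegral_const_mul (h : DiamondIntegrable T φ α a b)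
    (c : ℝ) :
    lowerDIntegral T (fun t => c * φ t) α a b = c * diamondIntegral T φ α a b := by
  have hneg : (fun t => -(c * φ t)) = fun t => -c * φ t := funext fun _ => (neg_mul _ _).symm
  rw [lowerDIntegral_eq_neg_upperDIntegral_neg, hneg, h.upperDIntegral_const_mul, neg_mul, neg_neg]

theorem _root_.DiamondIntegrable.exists_upperDSum_sub_lowerDSum_lt (ha : a ∈ T) (hb : b ∈ T)
    (hab : a < b) (hφ : IsBounded (φ '' (T ∩ Icc a b))) (hα : α ∈ Icc (0 : ℝ) 1)
    (h : DiamondIntegrable T φ α a b) {ε : ℝ} (hε : 0 < ε) :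
    ∃ P : TSPartition T a b, upperDSum T φ α P - lowerDSum T φ α P < ε := by
  have := TSPartition.nonempty ha hb hab
  obtain ⟨P, hP⟩ :
      ∃ P : TSPartition T a b, upperDSum T φ α P < upperDIntegral T φ α a b + ε / 2 :=
    exists_lt_of_ciInf_lt (by rw [← upperDIntegral_eq_iInf T φ α a b]; linarith)
  obtain ⟨Q, hQ⟩ :
      ∃ Q : TSPartition T a b, lowerDIntegral T φ α a b - ε / 2 < lowerDSum T φ α Q :=
    exists_lt_of_lt_ciSup (by rw [← lowerDIntegral_eq_iSup T φ α a b]; linarith)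
  obtain ⟨R, hPR, hQR⟩ := TSPartition.exists_common_refinement hab P Q
  have hUR := upperDSum_le_of_pts_subset hφ hα hPR
  have hLR := lowerDSum_le_of_pts_subset hφ hα hQR
  exact ⟨R, by rw [DiamondIntegrable] at h; linarith⟩

theorem diamondIntegrable_of_forall_exists_upperDSum_sub_lowerDSum_le (ha : a ∈ T) (hb : b ∈ T)
    (hab : a < b) (hφ : IsBounded (φ '' (T ∩ Icc a b))) (hα : α ∈ Icc (0 : ℝ) 1)
    (h : ∀ ε > 0, ∃ P : TSPartition T a b, upperDSum T φ α P - lowerDSum T φ α P ≤ ε) :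
    DiamondIntegrable T φ α a b := by
  refine le_antisymm (lowerDIntegral_le_upperDIntegral ha hb hab hφ hα)
    (le_of_forall_pos_le_add fun ε hε => ?_)
  obtain ⟨P, hP⟩ := h ε hε
  linarith [upperDIntegral_le_upperDSum hab hφ hα P, lowerDSum_le_lowerDIntegral hab hφ hα P]

theorem _root_.DiamondIntegrable.mul (ha : a ∈ T) (hb : b ∈ T) (hab : a < b) {f g : ℝ → ℝ}
    {Cf Cg : ℝ} (hCf : ∀ t ∈ T ∩ Icc a b, |f t| ≤ Cf) (hCg : ∀ t ∈ T ∩ Icc a b, |g t| ≤ Cg)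
    (hα : α ∈ Icc (0 : ℝ) 1) (hf : DiamondIntegrable T f α a b)
    (hg : DiamondIntegrable T g α a b) : DiamondIntegrable T (fun t => f t * g t) α a b := by
  have hmem : a ∈ T ∩ Icc a b := ⟨ha, le_rfl, hab.le⟩
  have hCf0 : 0 ≤ Cf := (abs_nonneg _).trans (hCf a hmem)
  have hCg0 : 0 ≤ Cg := (abs_nonneg _).trans (hCg a hmem)
  have hf_bdd := isBounded_image_of_abs_le hCf
  have hg_bdd := isBounded_image_of_abs_le hCg
  refine diamondIntegrable_of_forall_exists_upperDSum_sub_lowerDSum_le ha hb hab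
    (isBounded_image_of_abs_le (forall_abs_mul_le hCf0 hCf hCg)) hα fun ε hε => ?_
  set δ := ε / (Cf + Cg + 1)
  have hδ : 0 < δ := by positivity
  obtain ⟨P, hP⟩ := hf.exists_upperDSum_sub_lowerDSum_lt ha hb hab hf_bdd hα hδ
  obtain ⟨Q, hQ⟩ := hg.exists_upperDSum_sub_lowerDSum_lt ha hb hab hg_bdd hα hδ
  obtain ⟨R, hPR, hQR⟩ := TSPartition.exists_common_refinement hab P Q
  have hfR := (upperDSum_sub_lowerDSum_le_of_pts_subset hf_bdd hα hPR).trans hP.le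
  have hgR := (upperDSum_sub_lowerDSum_le_of_pts_subset hg_bdd hα hQR).trans hQ.le
  refine ⟨R, (upperDSum_mul_sub_lowerDSum_mul_le hCf0 hCg0 hCf hCg hα R).trans ?_⟩
  calc Cg * (upperDSum T f α R - lowerDSum T f α R) +
        Cf * (upperDSum T g α R - lowerDSum T g α R)
      ≤ Cg * δ + Cf * δ := by gcongr
    _ ≤ (Cf + Cg + 1) * δ := by nlinarith
    _ = ε := mul_div_cancel₀ ε (by positivity)

end DiamondAlpha

open DiamondAlpha Bornology in
theorem diamond_mean_value_integral_general (T : Set ℝ)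
    (a b : ℝ) (ha : a ∈ T) (hb : b ∈ T) (hab : a < b)
    (α : ℝ) (hα : α ∈ Set.Icc (0 : ℝ) 1) (f g : ℝ → ℝ)
    (hfb : ∃ C, ∀ t ∈ T ∩ Set.Icc a b, |f t| ≤ C)
    (hgb : ∃ C, ∀ t ∈ T ∩ Set.Icc a b, |g t| ≤ C)
    (hf : DiamondIntegrable T f α a b) (hg : DiamondIntegrable T g α a b)
    (hg0 : ∀ t ∈ T ∩ Set.Icc a b, 0 ≤ g t) :
    ∃ K ∈ Set.Icc (sInf (f '' (T ∩ Set.Icc a b))) (sSup (f '' (T ∩ Set.Icc a b))),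
      DiamondIntegrable T (fun t => f t * g t) α a b ∧
        diamondIntegral T (fun t => f t * g t) α a b = K * diamondIntegral T g α a b := by
  obtain ⟨Cf, hCf⟩ := hfb
  obtain ⟨Cg, hCg⟩ := hgb
  have hmem : a ∈ T ∩ Icc a b := ⟨ha, le_rfl, hab.le⟩
  have hf_bdd := isBounded_image_of_abs_le hCf
  have hfg_bdd := isBounded_image_of_abs_le
    (forall_abs_mul_le ((abs_nonneg _).trans (hCf a hmem)) hCf hCg)
  have hcg_bdd : ∀ c : ℝ, IsBounded ((fun t => c * g t) '' (T ∩ Icc a b)) := fun c =>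
    isBounded_image_of_abs_le (forall_abs_mul_le (abs_nonneg c) (fun _ _ => le_rfl) hCg)
  have hm : ∀ t ∈ T ∩ Icc a b, sInf (f '' (T ∩ Icc a b)) ≤ f t := fun t ht =>
    csInf_le hf_bdd.bddBelow (mem_image_of_mem f ht)
  have hM : ∀ t ∈ T ∩ Icc a b, f t ≤ sSup (f '' (T ∩ Icc a b)) := fun t ht =>
    le_csSup hf_bdd.bddAbove (mem_image_of_mem f ht)
  have hfg := hf.mul ha hb hab hCf hCg hα hg
  have hupper : diamondIntegral T (fun t => f t * g t) α a b ≤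
      sSup (f '' (T ∩ Icc a b)) * diamondIntegral T g α a b :=
    (upperDIntegral_mono ha hb hab hfg_bdd (hcg_bdd _) hα fun t ht =>
      mul_le_mul_of_nonneg_right (hM t ht) (hg0 t ht)).trans_eq (hg.upperDIntegral_const_mul _)
  have hlower : sInf (f '' (T ∩ Icc a b)) * diamondIntegral T g α a b ≤
      diamondIntegral T (fun t => f t * g t) α a b := by
    rw [← hg.lowerDIntegral_const_mul, diamondIntegral, ← hfg]
    exact lowerDIntegral_mono ha hb hab (hcg_bdd _) hfg_bdd hα fun t ht =>
      mul_le_mul_of_nonneg_right (hm t ht) (hg0 t ht)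
  obtain ⟨K, hK, hKeq⟩ := intermediate_value_Icc ((hm a hmem).trans (hM a hmem))
    (continuous_mul_const (diamondIntegral T g α a b)).continuousOn ⟨hlower, hupper⟩
  exact ⟨K, hK, hfg, hKeq.symm⟩

/-- first mean value theorem for diamond-alpha integrals. -/
theorem diamond_mean_value_integral (T : Set ℝ) (hT : T.Nonempty) (hTc : IsClosed T)
    (a b : ℝ) (ha : a ∈ T) (hb : b ∈ T) (hab : a < b)
    (α : ℝ) (hα : α ∈ Set.Icc (0 : ℝ) 1) (f g : ℝ → ℝ)
    (hfb : ∃ C, ∀ t ∈ T ∩ Set.Icc a b, |f t| ≤ C)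
    (hgb : ∃ C, ∀ t ∈ T ∩ Set.Icc a b, |g t| ≤ C)
    (hf : DiamondIntegrable T f α a b) (hg : DiamondIntegrable T g α a b)
    (hg0 : ∀ t ∈ T ∩ Set.Icc a b, 0 ≤ g t) :
    ∃ K ∈ Set.Icc (sInf (f '' (T ∩ Set.Icc a b))) (sSup (f '' (T ∩ Set.Icc a b))),
      DiamondIntegrable T (fun t => f t * g t) α a b ∧
        diamondIntegral T (fun t => f t * g t) α a b = K * diamondIntegral T g α a b :=
  diamond_mean_value_integral_general T a b ha hb hab α hα f g hfb hgb hf hg hg0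
end

section
/- On the time scale T = ℕ ∪ {0} with α = 1/2, the function f with f(t) = 1 for even t and f(t) = −1 for odd t has convergent improper diamond-1/2 integral ∫₀^∞ f(t) ⋄_{1/2} t = 0, even though the improper delta integral Σ_{k=0}^∞ f(k) and improper nabla integral Σ_{k=0}^∞ f(k+1) both diverge. -/
open Set Filter Topology

attribute [local instance] Classical.propDecidable

/-- A sequence whose consecutive differences all have absolute value 1 cannot converge. -/
lemma no_limit_of_jump (S : ℕ → ℝ) (h : ∀ A, |S (A + 1) - S A| = 1) :
    ¬ ∃ L : ℝ, Filter.Tendsto S Filter.atTop (nhds L) := by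
  rintro ⟨L, hL⟩
  have h2 : Filter.Tendsto (fun A => S (A + 1)) Filter.atTop (nhds L) :=
    hL.comp (Filter.tendsto_add_atTop_nat 1)
  have h3 : Filter.Tendsto (fun A => S (A + 1) - S A) Filter.atTop (nhds (L - L)) :=
    h2.sub hL
  rw [sub_self] at h3
  have h4 : Filter.Tendsto (fun A => |S (A + 1) - S A|) Filter.atTop (nhds 0) := by
    simpa using h3.abs
  have h5 : Filter.Tendsto (fun _ : ℕ => (1 : ℝ)) Filter.atTop (nhds 0) := by
    simpa [h] using h4
  have := tendsto_nhds_unique h5 tendsto_const_nhds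
  norm_num at this

/-- on `T = ℕ ∪ {0}` with `α = 1/2`, the alternating function has
improper diamond-1/2 integral `0`, while the improper delta and nabla integrals diverge. -/
theorem improper_diamond_half_example (f : ℕ → ℝ)
    (hf : ∀ t, f t = if Even t then (1 : ℝ) else -1) :
    Filter.Tendsto
        (fun A : ℕ =>
          (1 / 2 : ℝ) * (∑ k ∈ Finset.range A, f k) +
            (1 / 2 : ℝ) * (∑ k ∈ Finset.range A, f (k + 1)))
        Filter.atTop (nhds 0) ∧
      (¬ ∃ L : ℝ, Filter.Tendsto (fun A : ℕ => ∑ k ∈ Finset.range A, f k)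
          Filter.atTop (nhds L)) ∧
      (¬ ∃ L : ℝ, Filter.Tendsto (fun A : ℕ => ∑ k ∈ Finset.range A, f (k + 1))
          Filter.atTop (nhds L)) := by
  have hodd : ∀ k : ℕ, f (k + 1) = -f k := by
    intro k
    rcases Nat.even_or_odd k with hk | hk
    · rw [hf, hf, if_pos hk, if_neg (by simp [Nat.even_add_one, hk])]
    · rw [hf, hf, if_neg (Nat.not_even_iff_odd.mpr hk),
        if_pos (Nat.even_add_one.mpr (Nat.not_even_iff_odd.mpr hk))]
      norm_num
  refine ⟨?_, ?_, ?_⟩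
  · have : ∀ A : ℕ, (1 / 2 : ℝ) * (∑ k ∈ Finset.range A, f k) +
        (1 / 2 : ℝ) * (∑ k ∈ Finset.range A, f (k + 1)) = 0 := by
      intro A
      have : (∑ k ∈ Finset.range A, f (k + 1)) = -∑ k ∈ Finset.range A, f k := by
        rw [← Finset.sum_neg_distrib]
        exact Finset.sum_congr rfl fun k _ => by rw [hodd]
      rw [this]; ring
    have e : (fun A : ℕ => (1 / 2 : ℝ) * (∑ k ∈ Finset.range A, f k) +
        (1 / 2 : ℝ) * (∑ k ∈ Finset.range A, f (k + 1))) = fun _ => (0:ℝ) :=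
      funext this
    rw [e]
    exact tendsto_const_nhds
  · apply no_limit_of_jump
    intro A
    rw [Finset.sum_range_succ, add_sub_cancel_left, hf]
    split <;> norm_num
  · apply no_limit_of_jump
    intro A
    rw [Finset.sum_range_succ, add_sub_cancel_left, hf]
    split <;> norm_num
end
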